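/- For n ≥ 3: if a magic n-gon exists, then its magic sum is 3n + 3. -/

import Mathlib

/-- A magic `n`-gon: values `v i` at vertices, `m i` at the midpoint of the side
between `v i` and `v (i+1)`, and `c` at the center, all drawn injectively from
`{1, ..., 2n+1}`, such that every side sums to `s` and every diagonal (through
the center) sums to `s`.  For even `n` the diagonals join opposite vertices and
opposite midpoints; for odd `n` they join each vertex to the opposite midpoint. -/
def IsMagicNGon (n : ℕ) [NeZero n] (v m : ZMod n → ℕ) (c s : ℕ) : Prop :=
  Function.Injective (Sum.elim v (Sum.elim m (fun _ : Unit => c))) ∧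
  (∀ i, v i ∈ Finset.Icc 1 (2 * n + 1)) ∧
  (∀ i, m i ∈ Finset.Icc 1 (2 * n + 1)) ∧
  c ∈ Finset.Icc 1 (2 * n + 1) ∧
  (∀ i, v i + m i + v (i + 1) = s) ∧
  (if n % 2 = 0
    then ∀ i, v i + c + v (i + (n / 2 : ℕ)) = s ∧ m i + c + m (i + (n / 2 : ℕ)) = s
    else ∀ i, v i + c + m (i + (n / 2 : ℕ)) = s)

/-!
Every value other than the centre `c` lies on exactly one diagonal, so summing the sides and
the diagonals and comparing with `1 + ⋯ + (2n + 1) = (n + 1)(2n + 1)` shows that the vertex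
values sum to `n c` and that `n s + c = (n + 1)(2n + 1) + n c`. For even `n` the midpoint
diagonals also give `∑ m = n c`, whence `(2n + 1) c = (n + 1)(2n + 1)`. For odd `n` the
identity gives `c ≡ 1 (mod n)`, so `c ∈ {1, n + 1, 2n + 1}`; a side and a diagonal through the
same midpoint give `v i + v (i + 1) = v j + c`, which at a largest (resp. smallest) vertex value
rules out `c = 1` (resp. `c = 2n + 1`). Either way `c = n + 1`, and then `s = 3n + 3`.
-/

open Finset

lemma Finset.sum_Icc_one_id_mul_two (N : ℕ) : (∑ x ∈ Icc 1 N, x) * 2 = N * (N + 1) := by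
  have := sum_range_id_mul_two (N + 1)
  rw [range_eq_Ico, sum_eq_sum_Ico_succ_bot (Nat.succ_pos N), zero_add, Nat.succ_eq_add_one,
    Ico_add_one_right_eq_Icc, zero_add, Nat.add_sub_cancel] at this
  rw [this, mul_comm]

lemma Fintype.sum_mul_two_of_injective_of_mem_Icc {ι : Type*} [Fintype ι] {F : ι → ℕ}
    (hinj : Function.Injective F) (hmem : ∀ i, F i ∈ Icc 1 (Fintype.card ι)) :
    (∑ i, F i) * 2 = Fintype.card ι * (Fintype.card ι + 1) := by
  have himage : univ.image F = Icc 1 (Fintype.card ι) := by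
    refine eq_of_subset_of_card_le (fun x hx => ?_) ?_
    · obtain ⟨i, -, rfl⟩ := mem_image.mp hx
      exact hmem i
    · rw [card_image_of_injective _ hinj, Nat.card_Icc, card_univ, Nat.add_sub_cancel]
  rw [← sum_Icc_one_id_mul_two, ← himage, sum_image fun i _ j _ hij => hinj hij]

namespace ZMod

variable {n : ℕ} [NeZero n]

lemma sum_eq_mul_of_forall_eq {f : ZMod n → ℕ} {s : ℕ} (hf : ∀ i, f i = s) :
    ∑ i, f i = n * s := by
  rw [sum_eq_card_nsmul fun i _ => hf i, card_univ, ZMod.card, smul_eq_mul]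

lemma sum_add_sum_add_sum_eq_of_forall {f g k : ZMod n → ℕ} {a : ZMod n} {s : ℕ}
    (hs : ∀ i, f i + g i + k (i + a) = s) :
    ∑ i, f i + ∑ i, g i + ∑ i, k i = n * s := by
  rw [← sum_eq_mul_of_forall_eq hs, sum_add_distrib, sum_add_distrib,
    ← Equiv.sum_comp (Equiv.addRight a) k]
  rfl

lemma sum_const_nat (c : ℕ) : ∑ _i : ZMod n, c = n * c :=
  sum_eq_mul_of_forall_eq fun _ => rfl

end ZMod

namespace IsMagicNGon

variable {n : ℕ} [NeZero n] {v m : ZMod n → ℕ} {c s : ℕ}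

lemma side (h : IsMagicNGon n v m c s) (i : ZMod n) : v i + m i + v (i + 1) = s :=
  h.2.2.2.2.1 i

lemma vertex_mem (h : IsMagicNGon n v m c s) (i : ZMod n) : v i ∈ Icc 1 (2 * n + 1) :=
  h.2.1 i

lemma center_mem (h : IsMagicNGon n v m c s) : c ∈ Icc 1 (2 * n + 1) :=
  h.2.2.2.1

lemma diagonals_of_even (h : IsMagicNGon n v m c s) (heven : n % 2 = 0) (i : ZMod n) :
    v i + c + v (i + (n / 2 : ℕ)) = s ∧ m i + c + m (i + (n / 2 : ℕ)) = s := by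
  have hdiag := h.2.2.2.2.2
  rw [if_pos heven] at hdiag
  exact hdiag i

lemma diagonal_of_odd (h : IsMagicNGon n v m c s) (hodd : n % 2 = 1) (i : ZMod n) :
    v i + c + m (i + (n / 2 : ℕ)) = s := by
  have hdiag := h.2.2.2.2.2
  rw [if_neg (by omega)] at hdiag
  exact hdiag i

lemma vertex_ne_center (h : IsMagicNGon n v m c s) (i : ZMod n) : v i ≠ c := fun hvc =>
  Sum.inl_ne_inr (h.1 (a₁ := .inl i) (a₂ := .inr (.inr ())) hvc)

lemma sum_add_sum_add_center (h : IsMagicNGon n v m c s) :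
    ∑ i, v i + ∑ i, m i + c = (n + 1) * (2 * n + 1) := by
  obtain ⟨hinj, hv, hm, hc, -⟩ := h
  have hcard : Fintype.card (ZMod n ⊕ (ZMod n ⊕ Unit)) = 2 * n + 1 := by
    simp only [Fintype.card_sum, ZMod.card, Fintype.card_unit]
    ring
  have hmem : ∀ x, Sum.elim v (Sum.elim m fun _ : Unit => c) x ∈ Icc 1 (2 * n + 1) := by
    rintro (i | i | -)
    exacts [hv i, hm i, hc]
  have htotal := Fintype.sum_mul_two_of_injective_of_mem_Icc hinj (hcard ▸ hmem)
  simp only [hcard, Fintype.sum_sum_type, Sum.elim_inl, Sum.elim_inr, Finset.sum_const,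
    card_univ, Fintype.card_unit, one_smul] at htotal
  linarith

lemma two_mul_sum_add_sum (h : IsMagicNGon n v m c s) :
    2 * ∑ i, v i + ∑ i, m i = n * s := by
  have := ZMod.sum_add_sum_add_sum_eq_of_forall h.side
  omega

lemma sum_vertex_eq (h : IsMagicNGon n v m c s) : ∑ i, v i = n * c := by
  have hsides := h.two_mul_sum_add_sum
  rcases Nat.mod_two_eq_zero_or_one n with heven | hodd
  · have hv := ZMod.sum_add_sum_add_sum_eq_of_forall fun i => (h.diagonals_of_even heven i).1
    have hm := ZMod.sum_add_sum_add_sum_eq_of_forall fun i => (h.diagonals_of_even heven i).2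
    rw [ZMod.sum_const_nat] at hv hm
    omega
  · have hd := ZMod.sum_add_sum_add_sum_eq_of_forall (h.diagonal_of_odd hodd)
    rw [ZMod.sum_const_nat] at hd
    omega

lemma mul_add_center (h : IsMagicNGon n v m c s) :
    n * s + c = (n + 1) * (2 * n + 1) + n * c := by
  have := h.sum_add_sum_add_center
  have := h.two_mul_sum_add_sum
  have := h.sum_vertex_eq
  omega

lemma center_eq_of_even (h : IsMagicNGon n v m c s) (heven : n % 2 = 0) : c = n + 1 := by
  have hm := ZMod.sum_add_sum_add_sum_eq_of_forall fun i => (h.diagonals_of_even heven i).2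
  rw [ZMod.sum_const_nat] at hm
  have hv := h.sum_vertex_eq
  have hsides := h.two_mul_sum_add_sum
  have htotal := h.sum_add_sum_add_center
  rw [hv, show ∑ i, m i = n * c by omega] at htotal
  exact Nat.eq_of_mul_eq_mul_left (by omega : 0 < 2 * n + 1) (by linarith)

lemma vertex_add_vertex_succ (h : IsMagicNGon n v m c s) (hodd : n % 2 = 1) (i : ZMod n) :
    v i + v (i + 1) = v (i - (n / 2 : ℕ)) + c := by
  have hdiag := h.diagonal_of_odd hodd (i - (n / 2 : ℕ))
  rw [sub_add_cancel] at hdiag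
  have hside := h.side i
  omega

lemma center_ne_one (h : IsMagicNGon n v m c s) (hodd : n % 2 = 1) : c ≠ 1 := by
  rintro rfl
  obtain ⟨i, -, hmax⟩ := exists_max_image univ v univ_nonempty
  have hrec := h.vertex_add_vertex_succ hodd i
  have hle := hmax (i - (n / 2 : ℕ)) (mem_univ _)
  have hpos := (mem_Icc.mp (h.vertex_mem (i + 1))).1
  exact h.vertex_ne_center (i + 1) (by omega)

lemma center_ne_top (h : IsMagicNGon n v m c s) (hodd : n % 2 = 1) : c ≠ 2 * n + 1 := by
  rintro rfl
  obtain ⟨i, -, hmin⟩ := exists_min_image univ v univ_nonempty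
  have hrec := h.vertex_add_vertex_succ hodd i
  have hge := hmin (i - (n / 2 : ℕ)) (mem_univ _)
  have hle := (mem_Icc.mp (h.vertex_mem (i + 1))).2
  exact h.vertex_ne_center (i + 1) (by omega)

lemma center_eq_of_odd (h : IsMagicNGon n v m c s) (hodd : n % 2 = 1) (hn : 2 ≤ n) :
    c = n + 1 := by
  have hc := mem_Icc.mp h.center_mem
  have hdvd : n ∣ c - 1 := by
    have hkey := h.mul_add_center
    have : n * s + (c - 1) = n * (2 * n + 3 + c) := by
      zify [hc.1] at hkey ⊢
      linear_combination hkey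
    exact (Nat.dvd_add_right (dvd_mul_right n s)).mp (this ▸ dvd_mul_right _ _)
  obtain ⟨k, hk⟩ := hdvd
  have hk2 : k ≤ 2 := Nat.le_of_mul_le_mul_left (by omega : n * k ≤ n * 2) (by omega)
  interval_cases k
  · exact absurd (by omega) (h.center_ne_one hodd)
  · omega
  · exact absurd (by omega) (h.center_ne_top hodd)

end IsMagicNGon

theorem magic_sum_eq (n : ℕ) [NeZero n] (hn : 3 ≤ n) (v m : ZMod n → ℕ) (c s : ℕ)
    (h : IsMagicNGon n v m c s) : s = 3 * n + 3 := by
  have hc : c = n + 1 := by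
    rcases Nat.mod_two_eq_zero_or_one n with heven | hodd
    · exact h.center_eq_of_even heven
    · exact h.center_eq_of_odd hodd (by omega)
  have hkey := h.mul_add_center
  subst hc
  exact Nat.eq_of_mul_eq_mul_left (by omega : 0 < n) (by linarith)
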